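/- (Approximation guarantee for second-moment sorting.) Let g, K, Q be positive integers, d = K·g, C > 0, and let (Ω, 𝔽, ℙ) be a probability space carrying real random variables x_0, …, x_{d−1} with finite second moments μ_i² = 𝔼[x_i²]. Assume: (i) for every grouping f : Fin d → Fin K with all fibers of cardinality g, each group maximum max_{i ∈ f⁻¹(k)} x_i² is integrable; and (ii) the extremal-control condition holds: for every such grouping and every group G_k = f⁻¹(k), 𝔼[max_{i ∈ G_k} x_i²] ≤ C·log₂(2g)·max_{i ∈ G_k} μ_i². Let σ be a permutation of Fin d such that i ↦ μ_{σ(i)}² is antitone (descending), and let f_sort be the grouping whose group k is σ({k·g, …, k·g + g − 1}), i.e., f_sort(j) = ⌊σ⁻¹(j)/g⌋. Define ℰ(f) = (g/(12·Q²)) · Σ_k 𝔼[max_{i ∈ f⁻¹(k)} x_i²]. Then for every grouping f with all fibers of cardinality g, ℰ(f_sort) ≤ C·log₂(2g)·ℰ(f); in particular ℰ(f_sort) ≤ C·log₂(2g)·min_f ℰ(f). -/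

import Mathlib

/-!
The extremal-control condition bounds `𝔼[max_{G_k} x_i²]` for the sorted grouping by
`C·log₂(2g)·max_{G_k} μ_i²`, while `max_{G_k} μ_i² ≤ 𝔼[max_{G_k} x_i²]` for every grouping. So it
suffices that the sorted grouping minimises `Σ_k max_{G_k} μ_i²`. Relabel by `σ`, so that `μ` is
antitone and the maximum over a block sits at its least index. List the blocks of any grouping
by increasing least index: the `j`-th least index is at most `j·g`, because every smaller index
lies in one of the `j` earlier blocks, while the `j`-th contiguous block starts at `j·g`.
-/

open Finset MeasureTheory Real

/-- The fiber (group) of a grouping function `f : Fin d → Fin K` over group `k`. -/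
def qFiber {d K : ℕ} (f : Fin d → Fin K) (k : Fin K) : Finset (Fin d) :=
  Finset.univ.filter fun i => f i = k

lemma qFiber_nonempty {d K g : ℕ} (hg : 0 < g) {f : Fin d → Fin K}
    (hf : ∀ k : Fin K, (qFiber f k).card = g) (k : Fin K) : (qFiber f k).Nonempty :=
  Finset.card_pos.mp (by rw [hf k]; exact hg)

/-- The second-moment-sorted grouping `f_sort(j) = ⌊σ⁻¹(j)/g⌋`, whose group `k`
is `σ({k·g, …, k·g + g − 1})`. -/
def sortGrouping (g K d : ℕ) (hg : 0 < g) (hd : d = K * g)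
    (σ : Equiv.Perm (Fin d)) (j : Fin d) : Fin K :=
  ⟨(σ⁻¹ j).val / g, (Nat.div_lt_iff_lt_mul hg).mpr (by have := (σ⁻¹ j).isLt; omega)⟩

lemma sortGrouping_fiber_nonempty (g K d : ℕ) (hg : 0 < g) (hd : d = K * g)
    (σ : Equiv.Perm (Fin d)) (k : Fin K) :
    (qFiber (sortGrouping g K d hg hd σ) k).Nonempty := by
  have hlt : k.val * g < d := by
    have hk := k.isLt
    have h2 : k.val * g < K * g := mul_lt_mul_of_pos_right hk hg
    omega
  refine ⟨σ ⟨k.val * g, hlt⟩, ?_⟩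
  simp only [qFiber, Finset.mem_filter, Finset.mem_univ, true_and]
  apply Fin.ext
  simp [sortGrouping, Nat.mul_div_cancel _ hg]

section Grouping

variable {d K : ℕ}

lemma qFiber_comp_perm (f : Fin d → Fin K) (e : Equiv.Perm (Fin d)) (k : Fin K) :
    qFiber (f ∘ e) k = (qFiber f k).map e.symm.toEmbedding := by
  ext i
  simp [qFiber]

lemma card_qFiber_comp_perm (f : Fin d → Fin K) (e : Equiv.Perm (Fin d)) (k : Fin K) :
    #(qFiber (f ∘ e) k) = #(qFiber f k) := by
  rw [qFiber_comp_perm, card_map]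

lemma sup'_qFiber_comp_perm {α : Type*} [SemilatticeSup α] (f : Fin d → Fin K)
    (e : Equiv.Perm (Fin d)) (k : Fin K) (μ : Fin d → α) (H : (qFiber (f ∘ e) k).Nonempty)
    (H' : (qFiber f k).Nonempty) :
    (qFiber (f ∘ e) k).sup' H (μ ∘ e) = (qFiber f k).sup' H' μ := by
  rw [sup'_congr H (qFiber_comp_perm f e k) fun _ _ => rfl, sup'_map]
  exact sup'_congr _ rfl fun i _ => by simp

end Grouping

section SortGrouping

variable (g K d : ℕ) (hg : 0 < g) (hd : d = K * g)

lemma sortGrouping_eq_comp (σ : Equiv.Perm (Fin d)) :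
    sortGrouping g K d hg hd σ = sortGrouping g K d hg hd 1 ∘ ⇑σ⁻¹ :=
  rfl

lemma map_qFiber_sortGrouping_one (k : Fin K) :
    (qFiber (sortGrouping g K d hg hd 1) k).map Fin.valEmbedding =
      Ico (k * g) (k * g + g) := by
  have hk : k * g + g ≤ d := by rw [hd, ← Nat.succ_mul]; exact Nat.mul_le_mul_right g k.isLt
  ext n
  simp only [qFiber, sortGrouping, inv_one, Equiv.Perm.coe_one, id_eq, mem_map, mem_filter,
    mem_univ, true_and, Fin.ext_iff, Nat.div_eq_iff hg, Fin.valEmbedding_apply, mem_Ico]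
  constructor
  · rintro ⟨a, ⟨ha₁, ha₂⟩, rfl⟩
    omega
  · rintro ⟨hn₁, hn₂⟩
    exact ⟨⟨n, by omega⟩, ⟨hn₁, show n ≤ _ by omega⟩, rfl⟩

lemma card_qFiber_sortGrouping (σ : Equiv.Perm (Fin d)) (k : Fin K) :
    #(qFiber (sortGrouping g K d hg hd σ) k) = g := by
  rw [sortGrouping_eq_comp, card_qFiber_comp_perm, ← card_map Fin.valEmbedding,
    map_qFiber_sortGrouping_one, Nat.card_Ico, Nat.add_sub_cancel_left]

end SortGrouping

section BlockMinima

variable {d K g : ℕ} (h : Fin d → Fin K) (hne : ∀ k, (qFiber h k).Nonempty)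

def fiberMin (k : Fin K) : Fin d :=
  (qFiber h k).min' (hne k)

lemma apply_fiberMin (k : Fin K) : h (fiberMin h hne k) = k :=
  (mem_filter.mp ((qFiber h k).min'_mem (hne k))).2

lemma fiberMin_apply_le {i : Fin d} : fiberMin h hne (h i) ≤ i :=
  (qFiber h (h i)).min'_le i (by simp [qFiber])

-- Everything below the `j`-th smallest block minimum lies in one of the `j` blocks before it.
lemma val_fiberMin_sort_le (hcard : ∀ k, #(qFiber h k) ≤ g) (j : Fin K) :
    (fiberMin h hne (Tuple.sort (fiberMin h hne) j)).val ≤ j * g := by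
  set m := fiberMin h hne
  set τ := Tuple.sort m
  have hmono : StrictMono (m ∘ τ) :=
    (Tuple.monotone_sort m).strictMono_of_injective
      ((Function.LeftInverse.injective (apply_fiberMin h hne)).comp τ.injective)
  have hcover : Iio (m (τ j)) ⊆ (Iio j).biUnion fun j' => qFiber h (τ j') := by
    intro i hi
    refine mem_biUnion.mpr ⟨τ⁻¹ (h i), mem_Iio.mpr (hmono.lt_iff_lt.mp ?_), ?_⟩
    · simpa using (fiberMin_apply_le h hne).trans_lt (mem_Iio.mp hi)
    · simp [qFiber]
  calc (m (τ j)).val = #(Iio (m (τ j))) := (Fin.card_Iio _).symm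
    _ ≤ #((Iio j).biUnion fun j' => qFiber h (τ j')) := card_le_card hcover
    _ ≤ #(Iio j) * g := card_biUnion_le_card_mul _ _ _ fun _ _ => hcard _
    _ = j * g := by rw [Fin.card_Iio]

end BlockMinima

section SortedGroupingOptimal

variable (g K d : ℕ) (hg : 0 < g) (hd : d = K * g) {α : Type*} [LinearOrder α]

lemma sup'_qFiber_sortGrouping_one_le {ν : Fin d → α} (hν : Antitone ν) (k : Fin K)
    {p : Fin d} (hp : p.val ≤ k * g) :
    (qFiber (sortGrouping g K d hg hd 1) k).sup'
      (sortGrouping_fiber_nonempty g K d hg hd 1 k) ν ≤ ν p := by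
  refine sup'_le _ _ fun i hi => hν (hp.trans ?_)
  simp only [qFiber, sortGrouping, inv_one, Equiv.Perm.coe_one, id_eq, mem_filter, mem_univ,
    true_and, Fin.ext_iff] at hi
  exact hi ▸ Nat.div_mul_le_self i g

lemma sum_sup'_sortGrouping_one_le [AddCommMonoid α] [IsOrderedAddMonoid α] {ν : Fin d → α}
    (hν : Antitone ν) (h : Fin d → Fin K) (hh : ∀ k, #(qFiber h k) = g) :
    ∑ k, (qFiber (sortGrouping g K d hg hd 1) k).sup'
        (sortGrouping_fiber_nonempty g K d hg hd 1 k) ν ≤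
      ∑ k, (qFiber h k).sup' (qFiber_nonempty hg hh k) ν := by
  set hne := qFiber_nonempty hg hh
  calc _ ≤ ∑ j, ν (fiberMin h hne (Tuple.sort (fiberMin h hne) j)) :=
        sum_le_sum fun j _ => sup'_qFiber_sortGrouping_one_le g K d hg hd hν j
          (val_fiberMin_sort_le h hne (fun k => (hh k).le) j)
    _ = ∑ k, ν (fiberMin h hne k) := Equiv.sum_comp _ (ν ∘ fiberMin h hne)
    _ ≤ _ := sum_le_sum fun k _ => le_sup' ν ((qFiber h k).min'_mem (hne k))

lemma sum_sup'_sortGrouping_le [AddCommMonoid α] [IsOrderedAddMonoid α] {μ : Fin d → α}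
    (σ : Equiv.Perm (Fin d)) (hσ : Antitone (μ ∘ σ)) (f : Fin d → Fin K)
    (hf : ∀ k, #(qFiber f k) = g) :
    ∑ k, (qFiber (sortGrouping g K d hg hd σ) k).sup'
        (sortGrouping_fiber_nonempty g K d hg hd σ k) μ ≤
      ∑ k, (qFiber f k).sup' (qFiber_nonempty hg hf k) μ := by
  have hfσ : ∀ k, #(qFiber (f ∘ σ) k) = g := fun k =>
    (card_qFiber_comp_perm f σ k).trans (hf k)
  calc _ = ∑ k, (qFiber (sortGrouping g K d hg hd 1) k).sup'
          (sortGrouping_fiber_nonempty g K d hg hd 1 k) (μ ∘ σ) := by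
        refine sum_congr rfl fun k _ => ?_
        rw [← sup'_qFiber_comp_perm (sortGrouping g K d hg hd 1) σ⁻¹ k (μ ∘ σ)
          (sortGrouping_fiber_nonempty g K d hg hd σ k)]
        exact sup'_congr _ rfl fun i _ => by simp
    _ ≤ ∑ k, (qFiber (f ∘ σ) k).sup' (qFiber_nonempty hg hfσ k) (μ ∘ σ) :=
        sum_sup'_sortGrouping_one_le g K d hg hd hσ (f ∘ σ) hfσ
    _ = _ := sum_congr rfl fun k _ => sup'_qFiber_comp_perm f σ k μ _ _

end SortedGroupingOptimal

lemma sup'_integral_le_integral_sup' {ι Ω : Type*} [MeasurableSpace Ω] {ℙ : Measure Ω}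
    {s : Finset ι} (hs : s.Nonempty) {F : ι → Ω → ℝ} (hF : ∀ i ∈ s, Integrable (F i) ℙ)
    (hsup : Integrable (fun ω => s.sup' hs fun i => F i ω) ℙ) :
    (s.sup' hs fun i => ∫ ω, F i ω ∂ℙ) ≤ ∫ ω, s.sup' hs (fun i => F i ω) ∂ℙ :=
  sup'_le _ _ fun i hi => integral_mono (hF i hi) hsup fun ω => le_sup' (fun i => F i ω) hi

theorem second_moment_sorting_approximation_guarantee_general
    (g K Q : ℕ) (hg : 0 < g)
    (d : ℕ) (hd : d = K * g) (C : ℝ) (hC : 0 < C)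
    {Ω : Type*} [MeasurableSpace Ω] (ℙ : Measure Ω)
    (x : Fin d → Ω → ℝ)
    (hsq : ∀ i, Integrable (fun ω => (x i ω) ^ 2) ℙ)
    (hint : ∀ f : Fin d → Fin K, ∀ hf : (∀ k : Fin K, (qFiber f k).card = g),
      ∀ k : Fin K, Integrable (fun ω =>
        (qFiber f k).sup' (qFiber_nonempty hg hf k) fun i => (x i ω) ^ 2) ℙ)
    (hext : ∀ f : Fin d → Fin K, ∀ hf : (∀ k : Fin K, (qFiber f k).card = g),
      ∀ k : Fin K,
        (∫ ω, ((qFiber f k).sup' (qFiber_nonempty hg hf k) fun i => (x i ω) ^ 2) ∂ℙ) ≤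
          C * Real.logb 2 (2 * g) *
            (qFiber f k).sup' (qFiber_nonempty hg hf k) fun i => ∫ ω, (x i ω) ^ 2 ∂ℙ)
    (σ : Equiv.Perm (Fin d))
    (hσ : Antitone fun i : Fin d => ∫ ω, (x (σ i) ω) ^ 2 ∂ℙ) :
    ∀ f : Fin d → Fin K, ∀ hf : (∀ k : Fin K, (qFiber f k).card = g),
      ((g : ℝ) / (12 * (Q : ℝ) ^ 2)) *
          ∑ k : Fin K, ∫ ω,
            ((qFiber (sortGrouping g K d hg hd σ) k).sup'
              (sortGrouping_fiber_nonempty g K d hg hd σ k) fun i => (x i ω) ^ 2) ∂ℙ ≤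
        C * Real.logb 2 (2 * g) *
          (((g : ℝ) / (12 * (Q : ℝ) ^ 2)) *
            ∑ k : Fin K, ∫ ω,
              ((qFiber f k).sup'
                (qFiber_nonempty hg hf k)
                fun i => (x i ω) ^ 2) ∂ℙ) := by
  intro f hf
  set L := C * Real.logb 2 (2 * g)
  have hL : 0 ≤ L := mul_nonneg hC.le (Real.logb_nonneg one_lt_two (by norm_cast; omega))
  set μ : Fin d → ℝ := fun i => ∫ ω, (x i ω) ^ 2 ∂ℙ
  have hsum : ∑ k, ∫ ω, ((qFiber (sortGrouping g K d hg hd σ) k).sup'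
        (sortGrouping_fiber_nonempty g K d hg hd σ k) fun i => (x i ω) ^ 2) ∂ℙ ≤
      L * ∑ k, ∫ ω, ((qFiber f k).sup' (qFiber_nonempty hg hf k) fun i => (x i ω) ^ 2) ∂ℙ :=
    calc _ ≤ ∑ k, L * (qFiber (sortGrouping g K d hg hd σ) k).sup'
            (sortGrouping_fiber_nonempty g K d hg hd σ k) μ :=
          sum_le_sum fun k _ => hext _ (card_qFiber_sortGrouping g K d hg hd σ) k
      _ ≤ L * ∑ k, (qFiber f k).sup' (qFiber_nonempty hg hf k) μ := by
          rw [← mul_sum]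
          exact mul_le_mul_of_nonneg_left
            (sum_sup'_sortGrouping_le g K d hg hd (μ := μ) σ hσ f hf) hL
      _ ≤ _ := by
          gcongr with k
          exact sup'_integral_le_integral_sup' _ (fun i _ => hsq i) (hint f hf k)
  calc _ ≤ (g : ℝ) / (12 * (Q : ℝ) ^ 2) * (L * _) := by gcongr
    _ = _ := mul_left_comm _ _ _

/-- Approximation guarantee for second-moment sorting: assuming integrability of all group
maxima and the extremal-control condition for all groupings with fibers of cardinality `g`,
the second-moment-sorted grouping `f_sort` satisfies `ℰ(f_sort) ≤ C·log₂(2g)·ℰ(f)` for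
every grouping `f` with fibers of cardinality `g`, where
`ℰ(f) = (g/(12Q²)) Σ_k 𝔼[max_{i ∈ f⁻¹(k)} x_i²]`. -/
theorem second_moment_sorting_approximation_guarantee
    (g K Q : ℕ) (hg : 0 < g) (hK : 0 < K) (hQ : 0 < Q)
    (d : ℕ) (hd : d = K * g) (C : ℝ) (hC : 0 < C)
    {Ω : Type*} [MeasurableSpace Ω] (ℙ : Measure Ω) [IsProbabilityMeasure ℙ]
    (x : Fin d → Ω → ℝ)
    (hmeas : ∀ i, Measurable (x i))
    (hsq : ∀ i, Integrable (fun ω => (x i ω) ^ 2) ℙ)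
    (hint : ∀ f : Fin d → Fin K, ∀ hf : (∀ k : Fin K, (qFiber f k).card = g),
      ∀ k : Fin K, Integrable (fun ω =>
        (qFiber f k).sup' (qFiber_nonempty hg hf k) fun i => (x i ω) ^ 2) ℙ)
    (hext : ∀ f : Fin d → Fin K, ∀ hf : (∀ k : Fin K, (qFiber f k).card = g),
      ∀ k : Fin K,
        (∫ ω, ((qFiber f k).sup' (qFiber_nonempty hg hf k) fun i => (x i ω) ^ 2) ∂ℙ) ≤
          C * Real.logb 2 (2 * g) *
            (qFiber f k).sup' (qFiber_nonempty hg hf k) fun i => ∫ ω, (x i ω) ^ 2 ∂ℙ)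
    (σ : Equiv.Perm (Fin d))
    (hσ : Antitone fun i : Fin d => ∫ ω, (x (σ i) ω) ^ 2 ∂ℙ) :
    ∀ f : Fin d → Fin K, ∀ hf : (∀ k : Fin K, (qFiber f k).card = g),
      ((g : ℝ) / (12 * (Q : ℝ) ^ 2)) *
          ∑ k : Fin K, ∫ ω,
            ((qFiber (sortGrouping g K d hg hd σ) k).sup'
              (sortGrouping_fiber_nonempty g K d hg hd σ k) fun i => (x i ω) ^ 2) ∂ℙ ≤
        C * Real.logb 2 (2 * g) *
          (((g : ℝ) / (12 * (Q : ℝ) ^ 2)) *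
            ∑ k : Fin K, ∫ ω,
              ((qFiber f k).sup'
                (qFiber_nonempty hg hf k)
                fun i => (x i ω) ^ 2) ∂ℙ) :=
  second_moment_sorting_approximation_guarantee_general g K Q hg d hd C hC ℙ x hsq hint hext σ hσ
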